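/- arXiv:2504.18732 — 5 statements merged into one kernel-verified Lean document; each statement's English description precedes it below -/
import Mathlib

section
/- Let 𝔞 be a nonzero squarefree ideal of ℤ[i] and let d(𝔞) be the smallest positive integer divisible by 𝔞 (i.e., the positive generator of 𝔞 ∩ ℤ). Then d(𝔞) ≤ N(𝔞) ≤ d(𝔞)². -/
/-- The absolute norm of an ideal of `ℤ[i]`, as the cardinality of the quotient ring. -/
noncomputable def idealNorm (𝔞 : Ideal GaussianInt) : ℕ :=
  Nat.card (GaussianInt ⧸ 𝔞)

/-!
The norm `N(𝔞)` lies in `𝔞 ∩ ℤ = dℤ`, so `d ∣ N(𝔞)`; and `d ∈ 𝔞`, so `N(𝔞)` divides the norm of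
the principal ideal `(d)`, which is `d ^ [ℤ[i] : ℤ] = d²`.
-/

namespace Zsqrtd

variable (d : ℤ)

def addEquivProd : ℤ√d ≃+ ℤ × ℤ where
  toFun z := (z.re, z.im)
  invFun p := ⟨p.1, p.2⟩
  left_inv _ := rfl
  right_inv _ := rfl
  map_add' _ _ := rfl

instance : Module.Free ℤ (ℤ√d) := .of_equiv (addEquivProd d).toIntLinearEquiv.symm

instance : Module.Finite ℤ (ℤ√d) := .equiv (addEquivProd d).toIntLinearEquiv.symm

theorem finrank_int : Module.finrank ℤ (ℤ√d) = 2 := by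
  simp [(addEquivProd d).toIntLinearEquiv.finrank_eq]

end Zsqrtd

namespace Ideal

variable {S : Type*} [CommRing S] [IsDedekindDomain S] [Module.Free ℤ S]

theorem dvd_absNorm_of_comap_eq_span {I : Ideal S} {d : ℤ}
    (h : I.comap (Int.castRingHom S) = span {d}) : d ∣ absNorm I := by
  rw [← mem_span_singleton, ← h]
  simpa using absNorm_mem I

theorem absNorm_dvd_pow_finrank_of_intCast_mem [Module.Finite ℤ S] {I : Ideal S} {d : ℤ}
    (h : (d : S) ∈ I) : (absNorm I : ℤ) ∣ d ^ Module.finrank ℤ S := by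
  rw [← Algebra.norm_algebraMap, eq_intCast]
  exact absNorm_dvd_norm_of_mem h

end Ideal

theorem idealNorm_eq_absNorm (𝔞 : Ideal GaussianInt) : idealNorm 𝔞 = Ideal.absNorm 𝔞 := by
  rw [idealNorm, Ideal.absNorm_apply, Submodule.cardQuot_apply]

theorem stmt2_general (𝔞 : Ideal GaussianInt) (d : ℕ) (hd : 0 < d)
    (hgen : Ideal.comap (Int.castRingHom GaussianInt) 𝔞 = Ideal.span {(d : ℤ)}) :
    d ≤ idealNorm 𝔞 ∧ idealNorm 𝔞 ≤ d ^ 2 := by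
  have hd_mem : ((d : ℤ) : GaussianInt) ∈ 𝔞 := by
    change (d : ℤ) ∈ 𝔞.comap (Int.castRingHom _)
    exact hgen ▸ Ideal.mem_span_singleton_self _
  have hNd : Ideal.absNorm 𝔞 ∣ d ^ 2 := by
    have := Ideal.absNorm_dvd_pow_finrank_of_intCast_mem hd_mem
    rw [Zsqrtd.finrank_int] at this
    exact_mod_cast this
  have hdN : d ∣ Ideal.absNorm 𝔞 := by exact_mod_cast Ideal.dvd_absNorm_of_comap_eq_span hgen
  have hN_pos : 0 < Ideal.absNorm 𝔞 := Nat.pos_of_dvd_of_pos hNd (by positivity)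
  rw [idealNorm_eq_absNorm]
  exact ⟨Nat.le_of_dvd hN_pos hdN, Nat.le_of_dvd (by positivity) hNd⟩

theorem stmt2 (𝔞 : Ideal GaussianInt) (h0 : 𝔞 ≠ ⊥) (hsq : Squarefree 𝔞)
    (d : ℕ) (hd : 0 < d)
    (hgen : Ideal.comap (Int.castRingHom GaussianInt) 𝔞 = Ideal.span {(d : ℤ)}) :
    d ≤ idealNorm 𝔞 ∧ idealNorm 𝔞 ≤ d ^ 2 :=
  stmt2_general 𝔞 d hd hgen
end

section
/- Let π ∈ ℤ[i] with N(π) = p a rational prime, and let q ≡ 1 (mod 4) be a rational prime with q = π_q · conj(π_q) in ℤ[i]. If π_q | π − 1 and conj(π_q) | π + 1, then q ≤ 2√p + 2. -/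
theorem stmt6 (π πq : GaussianInt) (p q : ℕ) (hp : p.Prime) (hq : q.Prime)
    (hnorm : Zsqrtd.norm π = p) (hq4 : q % 4 = 1)
    (hsplit : (q : GaussianInt) = πq * star πq)
    (h1 : πq ∣ π - 1) (h2 : star πq ∣ π + 1) :
    (q : ℝ) ≤ 2 * Real.sqrt p + 2 := by
  -- norm of πq is q
  have hNq : Zsqrtd.norm πq = q := by
    have h := congrArg Zsqrtd.norm hsplit
    rw [Zsqrtd.norm_mul, Zsqrtd.norm_conj] at h
    have hqn : Zsqrtd.norm (q : GaussianInt) = (q : ℤ) * q := by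
      simp [Zsqrtd.norm_def]
    rw [hqn] at h
    have hnn : 0 ≤ Zsqrtd.norm πq := Zsqrtd.norm_nonneg (by norm_num) _
    nlinarith [hq.pos]
  -- q ∣ norm (π - 1) and q ∣ norm (π + 1)
  have hd1 : (q : ℤ) ∣ Zsqrtd.norm (π - 1) := by
    obtain ⟨c, hc⟩ := h1
    rw [hc, Zsqrtd.norm_mul, hNq]
    exact Dvd.intro _ rfl
  have hd2 : (q : ℤ) ∣ Zsqrtd.norm (π + 1) := by
    obtain ⟨c, hc⟩ := h2
    rw [hc, Zsqrtd.norm_mul, Zsqrtd.norm_conj, hNq]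
    exact Dvd.intro _ rfl
  have hdiff : Zsqrtd.norm (π + 1) - Zsqrtd.norm (π - 1) = 4 * π.re := by
    simp [Zsqrtd.norm_def]
    ring
  have hd4 : (q : ℤ) ∣ 4 * π.re := hdiff ▸ dvd_sub hd2 hd1
  have hqZ : Prime (q : ℤ) := Nat.prime_iff_prime_int.mp hq
  have hq4' : ¬ (q : ℤ) ∣ 4 := by
    intro h
    have h4 : q ∣ 4 := Int.ofNat_dvd.mp h
    have := Nat.le_of_dvd (by norm_num) h4
    interval_cases q <;> simp_all
  have hdre : (q : ℤ) ∣ π.re := (hqZ.dvd_mul.mp hd4).resolve_left hq4'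
  have hpsum : π.re * π.re + π.im * π.im = p := by
    rw [Zsqrtd.norm_def] at hnorm; linarith [hnorm]
  -- π.re ≠ 0
  have hre0 : π.re ≠ 0 := by
    intro h
    rw [h] at hpsum
    have hpZ : Prime (p : ℤ) := Nat.prime_iff_prime_int.mp hp
    have hpdvd : (p : ℤ) ∣ π.im := by
      have : (p : ℤ) ∣ π.im * π.im := ⟨1, by linarith⟩
      exact (hpZ.dvd_mul.mp this).elim id id
    obtain ⟨k, hk⟩ := hpdvd
    have : (0 : ℤ) + (p * k) * (p * k) = p := by rw [← hk]; linarith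
    have hp2 : (2:ℤ) ≤ p := by exact_mod_cast hp.two_le
    have hk1 : k = 0 ∨ 1 ≤ k * k := by
      rcases lt_trichotomy k 0 with h'|h'|h'
      · right; nlinarith
      · left; exact h'
      · right; nlinarith
    rcases hk1 with rfl|hk1
    · nlinarith
    · have h5 : (p:ℤ)*p ≤ (p:ℤ)*p*(k*k) := le_mul_of_one_le_right (by positivity) hk1
      nlinarith
  have hqle : (q : ℤ) ≤ |π.re| := Int.le_of_dvd (abs_pos.mpr hre0) ((dvd_abs _ _).mpr hdre)
  have hq2 : (q : ℤ) * q ≤ p := by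
    nlinarith [sq_abs π.re, sq_nonneg π.im, hq.pos, abs_nonneg π.re]
  have hq2' : (q : ℝ) * q ≤ p := by exact_mod_cast hq2
  have hsq : (q : ℝ) ≤ Real.sqrt p := by
    rw [show ((q:ℝ)) = Real.sqrt (q*q) by rw [Real.sqrt_mul_self (by positivity)]]
    exact Real.sqrt_le_sqrt hq2'
  have : (0:ℝ) ≤ Real.sqrt p := Real.sqrt_nonneg _
  linarith
end

section
/- For every positive integer t, the number of elements α ∈ ℤ[i] with N(α) = t, counted up to multiplication by units, is at most τ(t), the number of positive divisors of t. -/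
/-!
Strong induction on `t`, removing one rational prime `p ∣ t` at a time. If `p` stays prime in
`ℤ[i]`, it divides every `α` of norm `t` (as `p ∣ α ᾱ` and `p̄ = p`), so `α = p β` with
`N β = t / p²`. Otherwise `p = N π = π π̄` for a Gaussian prime `π`; writing `t = p ^ e * m` with
`p ∤ m`, every `α` of norm `t` is `π ^ i * π̄ ^ (e - i) * β` with `N β = m`, which leaves at most
`(e + 1) τ(m) = τ(t)` associate classes.
-/

open Finset Zsqrtd

local notation "ℤ[i]" => GaussianInt

theorem Prime.dvd_or_star_dvd_of_dvd_mul_star {R : Type*} [CommMonoidWithZero R] [StarMul R]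
    {π α : R} (hπ : Prime π) (h : π ∣ α * star α) : π ∣ α ∨ star π ∣ α := by
  refine (hπ.dvd_or_dvd h).imp_right fun ⟨c, hc⟩ => ⟨star c, ?_⟩
  rw [← star_star α, hc, star_mul']

section StarDomain

variable {R : Type*} [CommRing R] [IsDomain R] [StarRing R]

theorem Prime.exists_pow_mul_star_pow_dvd {π : R} (hπ : Prime π) :
    ∀ (e : ℕ) {α : R}, (π * star π) ^ e ∣ α * star α →
      ∃ i j, i + j = e ∧ π ^ i * star π ^ j ∣ α
  | 0, _, _ => ⟨0, 0, rfl, by simp⟩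
  | e + 1, α, h => by
    have hq : π * star π ≠ 0 := mul_ne_zero hπ.ne_zero (star_ne_zero.2 hπ.ne_zero)
    have hπα : π ∣ α * star α :=
      (dvd_mul_right π _).trans ((dvd_pow_self _ e.succ_ne_zero).trans h)
    rw [pow_succ'] at h
    rcases hπ.dvd_or_star_dvd_of_dvd_mul_star hπα with ⟨β, rfl⟩ | ⟨β, rfl⟩
    · have hβ : (π * star π) ^ e ∣ β * star β := by
        rw [star_mul', mul_mul_mul_comm] at h
        exact (mul_dvd_mul_iff_left hq).1 h
      obtain ⟨i, j, hij, hdvd⟩ := hπ.exists_pow_mul_star_pow_dvd e hβ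
      exact ⟨i + 1, j, by omega, by rw [pow_succ', mul_assoc]; exact mul_dvd_mul_left π hdvd⟩
    · have hβ : (π * star π) ^ e ∣ β * star β := by
        rw [star_mul', star_star, mul_mul_mul_comm, mul_comm (star π)] at h
        exact (mul_dvd_mul_iff_left hq).1 h
      obtain ⟨i, j, hij, hdvd⟩ := hπ.exists_pow_mul_star_pow_dvd e hβ
      refine ⟨i, j + 1, by omega, ?_⟩
      rw [pow_succ', mul_left_comm]
      exact mul_dvd_mul_left _ hdvd

end StarDomain

theorem Nat.card_divisors_prime_pow_mul {p m : ℕ} (hp : p.Prime) (hpm : ¬ p ∣ m) (e : ℕ) :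
    #(p ^ e * m).divisors = (e + 1) * #m.divisors := by
  rw [Nat.Coprime.card_divisors_mul ((hp.coprime_iff_not_dvd.2 hpm).pow_left e),
    Nat.divisors_prime_pow hp, card_map, card_range]

theorem Zsqrtd.irreducible_of_natAbs_norm_prime {d : ℤ} {x : ℤ√d} (h : x.norm.natAbs.Prime) :
    Irreducible x := by
  refine ⟨fun hu => h.ne_one (norm_eq_one_iff.2 hu), fun a b hab => ?_⟩
  rw [hab, norm_mul, Int.natAbs_mul, Nat.prime_mul_iff] at h
  exact h.symm.imp (fun h => norm_eq_one_iff.1 h.2) (fun h => norm_eq_one_iff.1 h.2)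

theorem Zsqrtd.norm_pow {d : ℤ} (x : ℤ√d) (n : ℕ) : (x ^ n).norm = x.norm ^ n :=
  map_pow normMonoidHom x n

namespace GaussianInt

theorem exists_norm_eq_of_not_prime {p : ℕ} (hp : p.Prime) (hpi : ¬ Prime (p : ℤ[i])) :
    ∃ π : ℤ[i], π.norm = p := by
  have := Fact.mk hp
  obtain ⟨a, b, hab⟩ := sq_add_sq_of_nat_prime_of_not_irreducible p (by rwa [irreducible_iff_prime])
  exact ⟨⟨a, b⟩, by rw [norm_def, ← hab]; push_cast; ring⟩

theorem exists_eq_natCast_mul_of_dvd_norm {p : ℕ} {α : ℤ[i]} (hp : Prime (p : ℤ[i]))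
    (h : (p : ℤ) ∣ α.norm) : ∃ β, α = p * β ∧ α.norm = p ^ 2 * β.norm := by
  have hdvd : (p : ℤ[i]) ∣ α * star α := by
    rw [← norm_eq_mul_conj]
    exact_mod_cast Int.cast_dvd_cast _ _ h
  obtain ⟨β, rfl⟩ : (p : ℤ[i]) ∣ α := by
    simpa using hp.dvd_or_star_dvd_of_dvd_mul_star hdvd
  exact ⟨β, rfl, by rw [Zsqrtd.norm_mul, norm_natCast]; ring⟩

def IsNormCover (t : ℕ) (S : Finset ℤ[i]) : Prop :=
  ∀ α : ℤ[i], α.norm = t → ∃ β ∈ S, Associated α β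

def HasSmallNormCover (t : ℕ) : Prop :=
  ∃ S : Finset ℤ[i], #S ≤ #t.divisors ∧ IsNormCover t S

theorem hasSmallNormCover_one : HasSmallNormCover 1 :=
  ⟨{1}, by simp, fun α hα =>
    ⟨1, mem_singleton_self 1,
      associated_one_iff_isUnit.2 ((norm_eq_one_iff' (by norm_num) α).1 hα)⟩⟩

theorem ne_zero_of_prime_natCast {p : ℕ} (hp : Prime (p : ℤ[i])) : p ≠ 0 := by
  rintro rfl
  rw [Nat.cast_zero] at hp
  exact not_prime_zero hp

theorem isNormCover_empty_of_not_sq_dvd {p t : ℕ} (hp : Prime (p : ℤ[i])) (hpt : p ∣ t)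
    (hp2 : ¬ p ^ 2 ∣ t) : IsNormCover t ∅ := by
  intro α hα
  obtain ⟨β, -, hβ⟩ := exists_eq_natCast_mul_of_dvd_norm hp (by rw [hα]; exact_mod_cast hpt)
  exact absurd (Int.natCast_dvd_natCast.1 ⟨β.norm, by rw [← hα, hβ]; push_cast; ring⟩) hp2

theorem IsNormCover.natCast_sq_mul {p m : ℕ} {S : Finset ℤ[i]} (hp : Prime (p : ℤ[i]))
    (hS : IsNormCover m S) : IsNormCover (p ^ 2 * m) (S.image ((p : ℤ[i]) * ·)) := by
  intro α hα
  obtain ⟨β, rfl, hβ⟩ := exists_eq_natCast_mul_of_dvd_norm hp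
    (by rw [hα]; push_cast; exact dvd_mul_of_dvd_left (dvd_pow_self _ two_ne_zero) _)
  have hp0 : (p : ℤ) ^ 2 ≠ 0 := by have := ne_zero_of_prime_natCast hp; positivity
  obtain ⟨β', hβ'S, hββ'⟩ := hS β (mul_left_cancel₀ hp0 (by rw [← hβ, hα]; push_cast; ring))
  exact ⟨_, mem_image_of_mem _ hβ'S, hββ'.mul_left _⟩

theorem HasSmallNormCover.natCast_sq_mul {p m : ℕ} (hp : Prime (p : ℤ[i]))
    (h : HasSmallNormCover m) : HasSmallNormCover (p ^ 2 * m) := by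
  obtain ⟨S, hcard, hS⟩ := h
  refine ⟨_, card_image_le.trans (hcard.trans ?_), hS.natCast_sq_mul hp⟩
  rcases eq_or_ne m 0 with rfl | hm
  · simp
  have hpm : p ^ 2 * m ≠ 0 := mul_ne_zero (pow_ne_zero 2 (ne_zero_of_prime_natCast hp)) hm
  exact card_le_card (Nat.divisors_subset_of_dvd hpm (dvd_mul_left m _))

theorem IsNormCover.pow_mul {p m : ℕ} {π : ℤ[i]} {S : Finset ℤ[i]} (hπ : Prime π)
    (hπp : π.norm = p) (hS : IsNormCover m S) (e : ℕ) :
    IsNormCover (p ^ e * m)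
      ((range (e + 1) ×ˢ S).image fun x => π ^ x.1 * star π ^ (e - x.1) * x.2) := by
  intro α hα
  have hp : (p : ℤ[i]) = π * star π := by rw [← norm_eq_mul_conj, hπp, Int.cast_natCast]
  have hdvd : (π * star π) ^ e ∣ α * star α := by
    rw [← hp, ← norm_eq_mul_conj, hα]
    push_cast
    exact dvd_mul_right _ _
  obtain ⟨i, j, rfl, β, rfl⟩ := hπ.exists_pow_mul_star_pow_dvd e hdvd
  have hpe : (p : ℤ) ^ (i + j) ≠ 0 := pow_ne_zero _ (hπp ▸ (norm_eq_zero.not.2 hπ.ne_zero))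
  have hβ : β.norm = m := by
    refine mul_left_cancel₀ hpe ?_
    rw [← Nat.cast_pow, ← Nat.cast_mul, ← hα, Zsqrtd.norm_mul, Zsqrtd.norm_mul, norm_pow,
      norm_pow, norm_conj, hπp, pow_add]
    push_cast
    ring
  obtain ⟨β', hβ'S, hββ'⟩ := hS β hβ
  refine ⟨_, mem_image.2 ⟨(i, β'), mem_product.2 ⟨mem_range.2 (by omega), hβ'S⟩, rfl⟩, ?_⟩
  simpa using hββ'.mul_left (π ^ i * star π ^ j)

theorem HasSmallNormCover.prime_pow_mul {p m : ℕ} {π : ℤ[i]} (hp : p.Prime) (hπp : π.norm = p)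
    (hpm : ¬ p ∣ m) (h : HasSmallNormCover m) (e : ℕ) : HasSmallNormCover (p ^ e * m) := by
  obtain ⟨S, hcard, hS⟩ := h
  have hπ : Prime π := irreducible_iff_prime.1 (irreducible_of_natAbs_norm_prime (by simpa [hπp]))
  refine ⟨_, card_image_le.trans ?_, hS.pow_mul hπ hπp e⟩
  rw [card_product, card_range, Nat.card_divisors_prime_pow_mul hp hpm]
  exact Nat.mul_le_mul_left _ hcard

end GaussianInt

open GaussianInt in
theorem stmt7 (t : ℕ) (ht : 0 < t) :
    ∃ S : Finset GaussianInt, S.card ≤ t.divisors.card ∧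
      ∀ α : GaussianInt, Zsqrtd.norm α = t → ∃ β ∈ S, Associated α β := by
  induction t using Nat.strong_induction_on with
  | _ t ih =>
  change HasSmallNormCover t
  obtain rfl | ht1 := eq_or_ne t 1
  · exact hasSmallNormCover_one
  obtain ⟨p, hp, hpt⟩ := Nat.exists_prime_and_dvd ht1
  by_cases hpi : Prime (p : ℤ[i])
  · by_cases hp2 : p ^ 2 ∣ t
    · obtain ⟨m, rfl⟩ := hp2
      have hm : 0 < m := pos_of_mul_pos_right ht (Nat.zero_le _)
      have hmt : m < p ^ 2 * m := lt_mul_left hm (Nat.one_lt_pow two_ne_zero hp.one_lt)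
      exact HasSmallNormCover.natCast_sq_mul hpi (ih m hmt hm)
    · exact ⟨∅, by simp, isNormCover_empty_of_not_sq_dvd hpi hpt hp2⟩
  · obtain ⟨π, hπ⟩ := exists_norm_eq_of_not_prime hp hpi
    have he : t.factorization p ≠ 0 := (hp.factorization_pos_of_dvd ht.ne' hpt).ne'
    have hmt : ordCompl[p] t < t := Nat.div_lt_self ht (Nat.one_lt_pow he hp.one_lt)
    rw [← Nat.ordProj_mul_ordCompl_eq_self t p]
    exact HasSmallNormCover.prime_pow_mul hp hπ (Nat.not_dvd_ordCompl hp ht.ne')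
      (ih _ hmt (Nat.ordCompl_pos p ht.ne')) _
end

section
/- For a prime q, the number of matrices σ ∈ GL₂(F_q) having 1 as an eigenvalue (equivalently, satisfying 1 − tr(σ) + det(σ) = 0 in F_q) equals q(q² − 2) = q³ − 2q. -/
/-!
Put `τ = σ - 1`. Then `σ` has eigenvalue `1` iff `det τ = 0`, and `σ` is invertible iff
`det (1 + τ) = 1 + tr τ + det τ ≠ 0`; so we count the singular `τ = !![x, b; c, y]`, i.e. those
with `b * c = x * y`, subject to `x + y ≠ -1`. The equation `b * c = e` has `q - 1` solutions when
`e ≠ 0` and `2 * q - 1` when `e = 0`. Of the `q ^ 2 - q` diagonals `(x, y)` with `x + y ≠ -1`,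
exactly `2 * q - 3` have `x * y = 0`, so the count is `(q - 1) * (q ^ 2 - q) + q * (2 * q - 3)`.
-/

open Finset

theorem Finset.card_filter_prod_eq_sum {α β : Type*} [Fintype α] [Fintype β]
    (r : α → β → Prop) [∀ a, DecidablePred (r a)] :
    #{x : α × β | r x.1 x.2} = ∑ a, #{b | r a b} := by
  simp only [card_filter, Fintype.sum_prod_type]

theorem Finset.card_filter_prod_and_eq_sum {α β : Type*} [Fintype α] [Fintype β]
    (p : α → Prop) (r : α → β → Prop) [DecidablePred p] [∀ a, DecidablePred (r a)] :
    #{x : α × β | p x.1 ∧ r x.1 x.2} = ∑ a with p a, #{b | r a b} := by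
  rw [card_filter_prod_eq_sum (fun a b => p a ∧ r a b), sum_filter]
  refine sum_congr rfl fun a _ => ?_
  split_ifs with ha <;> simp [ha]

namespace Matrix

theorem det_one_add_fin_two {R : Type*} [CommRing R] (A : Matrix (Fin 2) (Fin 2) R) :
    (1 + A).det = 1 + A.trace + A.det := by
  simp only [det_fin_two, trace_fin_two, add_apply, one_apply_eq, one_apply_ne, ne_eq,
    Fin.isValue, zero_ne_one, one_ne_zero, not_false_eq_true, zero_add]
  ring

@[simps]
def finTwoDiagOffDiagEquiv (R : Type*) : Matrix (Fin 2) (Fin 2) R ≃ (R × R) × (R × R) where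
  toFun A := ((A 0 0, A 1 1), (A 0 1, A 1 0))
  invFun x := !![x.1.1, x.2.1; x.2.2, x.1.2]
  left_inv A := (eta_fin_two A).symm
  right_inv _ := rfl

theorem card_filter_GL {n R : Type*} [Fintype n] [DecidableEq n] [CommRing R] [Fintype R]
    [DecidableEq R] (p : Matrix n n R → Prop) [DecidablePred p] :
    #{σ : GL n R | p σ} = #{A : Matrix n n R | IsUnit A.det ∧ p A} := by
  rw [← card_map ⟨Units.val, Units.val_injective⟩]
  congr 1
  ext A
  simp only [mem_map, mem_filter, mem_univ, true_and, Function.Embedding.coeFn_mk]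
  constructor
  · rintro ⟨σ, hσ, rfl⟩
    exact ⟨(isUnit_iff_isUnit_det _).mp σ.isUnit, hσ⟩
  · rintro ⟨hA, hpA⟩
    obtain ⟨σ, rfl⟩ := (isUnit_iff_isUnit_det A).mpr hA
    exact ⟨σ, hpA, rfl⟩

section Field

variable {K : Type*} [Field K] [Fintype K] [DecidableEq K]

theorem card_isUnit_det_and_det_sub_one_eq_zero_fin_two :
    #{A : Matrix (Fin 2) (Fin 2) K | IsUnit A.det ∧ (A - 1).det = 0} =
      #{A : Matrix (Fin 2) (Fin 2) K | A.det = 0 ∧ A.trace ≠ -1} := by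
  refine card_equiv (Equiv.subRight 1) fun A => ?_
  have h := det_one_add_fin_two (A - 1)
  rw [add_sub_cancel] at h
  simp only [mem_filter, mem_univ, true_and, Equiv.subRight_apply, isUnit_iff_ne_zero, h]
  constructor
  · rintro ⟨hA, hdet⟩
    refine ⟨hdet, fun htr => hA ?_⟩
    rw [htr, hdet]; ring
  · rintro ⟨hdet, htr⟩
    refine ⟨fun h0 => htr ?_, hdet⟩
    rw [hdet] at h0; linear_combination h0

theorem card_det_eq_zero_and_trace_ne_fin_two (t : K) :
    #{A : Matrix (Fin 2) (Fin 2) K | A.det = 0 ∧ A.trace ≠ t} =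
      #{x : (K × K) × (K × K) | x.1.1 + x.1.2 ≠ t ∧ x.2.1 * x.2.2 = x.1.1 * x.1.2} :=
  card_equiv (finTwoDiagOffDiagEquiv K) fun A => by
    simp only [mem_filter, mem_univ, true_and, det_fin_two, trace_fin_two,
      finTwoDiagOffDiagEquiv_apply, sub_eq_zero]
    rw [and_comm, mul_comm (A 0 1), eq_comm]

end Field

end Matrix

section FiniteField

variable {K : Type*} [Field K] [Fintype K] [DecidableEq K]

theorem card_filter_add_eq (t : K) : #{p : K × K | p.1 + p.2 = t} = Fintype.card K := by
  have hfib (a : K) : #{b | a + b = t} = 1 :=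
    card_eq_one.mpr ⟨t - a, by ext b; simp [eq_sub_iff_add_eq']⟩
  simp [card_filter_prod_eq_sum (fun a b => a + b = t), hfib]

theorem card_filter_add_ne (t : K) :
    #{p : K × K | p.1 + p.2 ≠ t} = Fintype.card K ^ 2 - Fintype.card K := by
  simp only [ne_eq]
  rw [filter_not, card_univ_sdiff, card_filter_add_eq, Fintype.card_prod, sq]

theorem card_filter_mul_eq (e : K) :
    #{p : K × K | p.1 * p.2 = e} = Fintype.card K - 1 + if e = 0 then Fintype.card K else 0 := by
  have hfib (a : K) (ha : a ∈ univ.erase 0) : #{b | a * b = e} = 1 :=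
    card_eq_one.mpr ⟨e / a, by ext b; simp [eq_div_iff (ne_of_mem_erase ha), mul_comm]⟩
  rw [card_filter_prod_eq_sum (fun a b => a * b = e), ← add_sum_erase _ _ (mem_univ 0), add_comm,
    sum_congr rfl hfib, sum_const, card_erase_of_mem (mem_univ _), card_univ, smul_eq_mul, mul_one]
  congr 1
  split_ifs with he <;> simp [he, eq_comm]

theorem card_filter_add_ne_mul_eq_zero {t : K} (ht : t ≠ 0) :
    #{p : K × K | p.1 + p.2 ≠ t ∧ p.1 * p.2 = 0} = 2 * Fintype.card K - 3 := by
  have hpair : ({p : K × K | p.1 * p.2 = 0 ∧ p.1 + p.2 = t} : Finset _) = {(0, t), (t, 0)} := by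
    ext ⟨x, y⟩
    simp only [mem_filter, mem_univ, true_and, mem_insert, mem_singleton, Prod.mk.injEq,
      mul_eq_zero]
    constructor
    · rintro ⟨rfl | rfl, h⟩ <;> simp_all
    · rintro (⟨rfl, rfl⟩ | ⟨rfl, rfl⟩) <;> simp
  have hsplit := card_filter_add_card_filter_not (s := {p : K × K | p.1 * p.2 = 0})
    (fun p => p.1 + p.2 = t)
  rw [filter_filter, filter_filter, hpair, card_pair (by simp [ht]), card_filter_mul_eq] at hsplit
  simp only [if_true, ← ne_eq, and_comm] at hsplit
  omega

theorem card_filter_add_ne_mul_eq_mul {t : K} (ht : t ≠ 0) :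
    #{x : (K × K) × (K × K) | x.1.1 + x.1.2 ≠ t ∧ x.2.1 * x.2.2 = x.1.1 * x.1.2} =
      Fintype.card K * (Fintype.card K ^ 2 - 2) := by
  rw [card_filter_prod_and_eq_sum (fun d : K × K => d.1 + d.2 ≠ t)
    (fun d o : K × K => o.1 * o.2 = d.1 * d.2)]
  simp only [card_filter_mul_eq, sum_add_distrib, sum_const, smul_eq_mul, sum_ite, mul_zero,
    add_zero, filter_filter, card_filter_add_ne, card_filter_add_ne_mul_eq_zero ht]
  have hq : 2 ≤ Fintype.card K := Fintype.one_lt_card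
  have hq2 : Fintype.card K ≤ Fintype.card K ^ 2 := Nat.le_self_pow two_ne_zero _
  zify [hq2, (by omega : 1 ≤ Fintype.card K), (by omega : 3 ≤ 2 * Fintype.card K),
    (by nlinarith : 2 ≤ Fintype.card K ^ 2)]
  ring

end FiniteField

theorem card_GL_fin_two_det_sub_one_eq_zero (K : Type*) [Field K] [Fintype K] [DecidableEq K] :
    #{σ : GL (Fin 2) K | ((σ : Matrix (Fin 2) (Fin 2) K) - 1).det = 0} =
      Fintype.card K * (Fintype.card K ^ 2 - 2) := by
  rw [Matrix.card_filter_GL fun A : Matrix (Fin 2) (Fin 2) K => (A - 1).det = 0,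
    Matrix.card_isUnit_det_and_det_sub_one_eq_zero_fin_two,
    Matrix.card_det_eq_zero_and_trace_ne_fin_two,
    card_filter_add_ne_mul_eq_mul (neg_ne_zero.mpr one_ne_zero)]

theorem stmt12 (q : ℕ) [Fact q.Prime] :
    (Finset.univ.filter
      (fun σ : GL (Fin 2) (ZMod q) =>
        Matrix.det ((σ : Matrix (Fin 2) (Fin 2) (ZMod q)) - 1) = 0)).card =
      q * (q ^ 2 - 2) := by
  simpa only [ZMod.card] using card_GL_fin_two_det_sub_one_eq_zero (ZMod q)
end

section
/- For real x ≥ 2 and z ≥ 2, the number of pairs (p, k) with p prime, z < p, and p²·k ≤ x, weighted by the divisor function — namely Σ_{z < p ≤ √x} Σ_{n ≤ x, p² | n} τ(n) — is O((x/z)·log x). -/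
/-!
Writing `n = p²m` and using `τ(p²m) ≤ τ(p²) τ(m) = 3 τ(m)`, the inner sum is at most
`3 ∑_{m ≤ M} τ(m)` with `M = ⌊x/p²⌋`, and `∑_{m ≤ M} τ(m) = ∑_{d ≤ M} ⌊M/d⌋ ≤ M (1 + log M)`
by the harmonic bound. Summing over `p > z` then costs only `∑_{n > z} n⁻² ≤ 2/z`.
-/

open scoped Classical

open Finset

theorem Nat.sum_card_divisors_Ioc_le (N : ℕ) :
    ∑ n ∈ Ioc 0 N, (#n.divisors : ℝ) ≤ N * (1 + Real.log N) := by
  have hdiv : ∑ n ∈ Ioc 0 N, #n.divisors = ∑ d ∈ Ioc 0 N, N / d := by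
    simpa only [ArithmeticFunction.sigma_zero_apply] using
      ArithmeticFunction.sum_Ioc_sigma0_eq_sum_div N
  have hharmonic : ∑ d ∈ Ioc 0 N, (d : ℝ)⁻¹ ≤ 1 + Real.log N := by
    have := harmonic_le_one_add_log N
    rw [harmonic_eq_sum_Icc] at this
    rw [← Icc_add_one_left_eq_Ioc, zero_add]
    push_cast at this
    exact this
  calc ∑ n ∈ Ioc 0 N, (#n.divisors : ℝ) = ∑ d ∈ Ioc 0 N, ((N / d : ℕ) : ℝ) := by
        exact_mod_cast hdiv
    _ ≤ ∑ d ∈ Ioc 0 N, (N : ℝ) * (d : ℝ)⁻¹ :=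
        sum_le_sum fun d _ => Nat.cast_div_le.trans_eq (div_eq_mul_inv _ _)
    _ = N * ∑ d ∈ Ioc 0 N, (d : ℝ)⁻¹ := (mul_sum _ _ _).symm
    _ ≤ N * (1 + Real.log N) := by gcongr

theorem Nat.card_divisors_mul_le (m n : ℕ) :
    #(m * n).divisors ≤ #m.divisors * #n.divisors := by
  rw [Nat.divisors_mul]
  exact card_mul_le

theorem Nat.card_divisors_prime_pow {p : ℕ} (hp : p.Prime) (k : ℕ) :
    #(p ^ k).divisors = k + 1 := by
  rw [Nat.divisors_prime_pow hp, card_map, card_range]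

theorem Nat.Ioc_filter_dvd_eq_map {q : ℕ} (hq : 0 < q) (N : ℕ) :
    {n ∈ Ioc 0 N | q ∣ n} = (Ioc 0 (N / q)).map ⟨(q * ·), mul_right_injective₀ hq.ne'⟩ := by
  ext n
  simp only [mem_filter, mem_Ioc, mem_map, Function.Embedding.coeFn_mk]
  constructor
  · rintro ⟨⟨hn, hnN⟩, m, rfl⟩
    exact ⟨m, ⟨Nat.pos_of_mul_pos_left hn, (Nat.le_div_iff_mul_le hq).2 (by linarith)⟩, rfl⟩
  · rintro ⟨m, ⟨hm, hmN⟩, rfl⟩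
    exact ⟨⟨Nat.mul_pos hq hm, by linarith [(Nat.le_div_iff_mul_le hq).1 hmN]⟩, dvd_mul_right q m⟩

theorem Nat.sum_Ioc_filter_dvd {M : Type*} [AddCommMonoid M] (f : ℕ → M) {q : ℕ} (hq : 0 < q)
    (N : ℕ) : ∑ n ∈ Ioc 0 N with q ∣ n, f n = ∑ m ∈ Ioc 0 (N / q), f (q * m) := by
  rw [Nat.Ioc_filter_dvd_eq_map hq, sum_map]
  rfl

theorem sum_card_divisors_Ioc_filter_sq_dvd_le {p : ℕ} (hp : p.Prime) {x : ℝ} (hx : 1 ≤ x) :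
    ∑ n ∈ Ioc 0 ⌊x⌋₊ with p ^ 2 ∣ n, (#n.divisors : ℝ) ≤ 3 * (x / p ^ 2) * (1 + Real.log x) := by
  set M := ⌊x⌋₊ / p ^ 2
  have hM : (M : ℝ) ≤ x / p ^ 2 := by
    calc (M : ℝ) ≤ (⌊x⌋₊ : ℝ) / (p ^ 2 : ℕ) := Nat.cast_div_le
      _ ≤ x / p ^ 2 := by push_cast; gcongr; exact Nat.floor_le (by linarith)
  have hlogM : Real.log M ≤ Real.log x := by
    rcases Nat.eq_zero_or_pos M with hM0 | hM0
    · simpa [hM0] using Real.log_nonneg hx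
    · refine Real.log_le_log (by exact_mod_cast hM0) (hM.trans (div_le_self (by linarith) ?_))
      exact_mod_cast Nat.one_le_pow _ _ hp.pos
  have hlogx : 0 ≤ 1 + Real.log x := by linarith [Real.log_nonneg hx]
  calc ∑ n ∈ Ioc 0 ⌊x⌋₊ with p ^ 2 ∣ n, (#n.divisors : ℝ)
      = ∑ m ∈ Ioc 0 M, (#(p ^ 2 * m).divisors : ℝ) :=
        Nat.sum_Ioc_filter_dvd _ (pow_pos hp.pos 2) _
    _ ≤ ∑ m ∈ Ioc 0 M, 3 * (#m.divisors : ℝ) := by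
        refine sum_le_sum fun m _ => ?_
        have := Nat.card_divisors_mul_le (p ^ 2) m
        rw [Nat.card_divisors_prime_pow hp] at this
        exact_mod_cast this
    _ = 3 * ∑ m ∈ Ioc 0 M, (#m.divisors : ℝ) := (mul_sum _ _ _).symm
    _ ≤ 3 * (M * (1 + Real.log M)) := by gcongr; exact Nat.sum_card_divisors_Ioc_le M
    _ ≤ 3 * (x / p ^ 2 * (1 + Real.log x)) := by gcongr
    _ = 3 * (x / p ^ 2) * (1 + Real.log x) := (mul_assoc _ _ _).symm

theorem sum_inv_sq_le_two_div {s : Finset ℕ} {z : ℝ} (hz : 0 < z) (hs : ∀ n ∈ s, z < n) :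
    ∑ n ∈ s, ((n : ℝ) ^ 2)⁻¹ ≤ 2 / z := by
  have hsub : s ⊆ Ioo ⌊z⌋₊ (s.sup id + 1) := fun n hn =>
    mem_Ioo.2 ⟨(Nat.floor_lt hz.le).2 (hs n hn), Nat.lt_succ_of_le (le_sup (f := id) hn)⟩
  calc ∑ n ∈ s, ((n : ℝ) ^ 2)⁻¹ ≤ ∑ n ∈ Ioo ⌊z⌋₊ (s.sup id + 1), ((n : ℝ) ^ 2)⁻¹ :=
        sum_le_sum_of_subset_of_nonneg hsub fun _ _ _ => by positivity
    _ ≤ 2 / (⌊z⌋₊ + 1) := sum_Ioo_inv_sq_le _ _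
    _ ≤ 2 / z := by gcongr; exact (Nat.lt_floor_add_one z).le

theorem stmt18 :
    ∃ C : ℝ, 0 < C ∧ ∀ x z : ℝ, 2 ≤ x → 2 ≤ z →
      (∑ p ∈ Finset.filter (fun p : ℕ => p.Prime ∧ z < (p : ℝ))
          (Finset.Icc 1 ⌊Real.sqrt x⌋₊),
        ∑ n ∈ Finset.filter (fun n : ℕ => p ^ 2 ∣ n) (Finset.Icc 1 ⌊x⌋₊),
          ((n.divisors.card : ℝ))) ≤ C * (x / z) * Real.log x := by
  refine ⟨18, by norm_num, fun x z hx hz => ?_⟩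
  set P : Finset ℕ := {p ∈ Icc 1 ⌊√x⌋₊ | p.Prime ∧ z < p}
  have hlog : 1 ≤ 2 * Real.log x := by
    linarith [Real.log_two_gt_d9, Real.log_le_log two_pos hx]
  rw [show Icc 1 ⌊x⌋₊ = Ioc 0 ⌊x⌋₊ from Icc_add_one_left_eq_Ioc 0 _]
  calc ∑ p ∈ P, ∑ n ∈ Ioc 0 ⌊x⌋₊ with p ^ 2 ∣ n, (#n.divisors : ℝ)
      ≤ ∑ p ∈ P, 3 * x * (1 + Real.log x) * ((p : ℝ) ^ 2)⁻¹ := by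
        refine sum_le_sum fun p hp => ?_
        exact (sum_card_divisors_Ioc_filter_sq_dvd_le (mem_filter.1 hp).2.1 (by linarith)).trans_eq
          (by ring)
    _ = 3 * x * (1 + Real.log x) * ∑ p ∈ P, ((p : ℝ) ^ 2)⁻¹ := (mul_sum _ _ _).symm
    _ ≤ 3 * x * (1 + Real.log x) * (2 / z) := by
        gcongr
        · exact mul_nonneg (by linarith) (by linarith)
        · exact sum_inv_sq_le_two_div (by linarith) fun p hp => (mem_filter.1 hp).2.2
    _ ≤ 18 * (x / z) * Real.log x := by
        rw [show 3 * x * (1 + Real.log x) * (2 / z) = 6 * (x / z) * (1 + Real.log x) by ring]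
        nlinarith [div_nonneg (by linarith : (0 : ℝ) ≤ x) (by linarith : (0 : ℝ) ≤ z)]
end
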